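/- Let A be a unital algebraic (not necessarily associative) algebra over a field F of characteristic zero and let R be a Rota–Baxter operator of nonzero weight λ on A. Then there exist natural numbers r, s such that ((R + λ·id)^r ∘ R^s)(1) = 0. -/

import Mathlib

/-!
Write `e = R 1`. The Rota–Baxter identity gives `e * Rⁿ(1) = (n + 1) • Rⁿ⁺¹(1) + (n * λ) • Rⁿ(1)`,
so in characteristic zero every `Rⁿ(1)` lies in the subalgebra generated by `1` and `e`, which is
finite-dimensional. Hence the ideal of polynomials `p` with `p(R)(1) = 0` is nonzero. Left
multiplication by `e` acts on `p(R)(1)` as `p ↦ X (X + λ) p' + X p`, so a generator `q` of that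
ideal divides `X (X + λ) q'`; in characteristic zero this forces `q ~ Xˢ (X + λ)ʳ`.
-/

open Polynomial

namespace Polynomial

theorem dvd_mul_derivative_of_X_sub_C_mul_dvd {K : Type*} [CommRing K] [IsDomain K] {α : K}
    {q g : K[X]} (h : (X - C α) * q ∣ (X - C α) * g * derivative ((X - C α) * q)) :
    q ∣ (X - C α) * g * derivative q := by
  have hexp : (X - C α) * g * derivative ((X - C α) * q)
      = (X - C α) * (g * q + (X - C α) * g * derivative q) := by
    rw [derivative_mul, derivative_sub, derivative_X, derivative_C]
    ring
  rw [hexp, mul_dvd_mul_iff_left (X_sub_C_ne_zero α)] at h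
  exact (dvd_add_right (dvd_mul_left q g)).mp h

variable {K : Type*} [Field K] [CharZero K]

theorem isUnit_of_dvd_mul_derivative {p g : K[X]} (hp : p ≠ 0) (hcop : IsCoprime p g)
    (h : p ∣ g * derivative p) : IsUnit p := by
  have hder : derivative p = 0 := dvd_derivative_iff.mp (hcop.dvd_of_dvd_mul_left h)
  rw [isUnit_iff_degree_eq_zero, degree_eq_natDegree hp, derivative_eq_zero.mp hder]
  rfl

theorem associated_pow_mul_pow_of_dvd_mul_derivative (α β : K) {p : K[X]} (hp : p ≠ 0)
    (h : p ∣ (X - C α) * (X - C β) * derivative p) :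
    ∃ a b : ℕ, Associated p ((X - C α) ^ a * (X - C β) ^ b) := by
  induction hn : p.natDegree using Nat.strong_induction_on generalizing p with
  | _ n ih =>
  by_cases hα : X - C α ∣ p
  · obtain ⟨q, rfl⟩ := hα
    have hq : q ≠ 0 := right_ne_zero_of_mul hp
    have hdeg : q.natDegree < n := by
      rw [← hn, natDegree_mul (X_sub_C_ne_zero α) hq, natDegree_X_sub_C]; omega
    obtain ⟨a, b, hab⟩ := ih _ hdeg hq (dvd_mul_derivative_of_X_sub_C_mul_dvd h) rfl
    exact ⟨a + 1, b, by convert hab.mul_left (X - C α) using 1; ring⟩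
  by_cases hβ : X - C β ∣ p
  · obtain ⟨q, rfl⟩ := hβ
    have hq : q ≠ 0 := right_ne_zero_of_mul hp
    have hdeg : q.natDegree < n := by
      rw [← hn, natDegree_mul (X_sub_C_ne_zero β) hq, natDegree_X_sub_C]; omega
    rw [mul_comm (X - C α)] at h
    have hq_dvd := dvd_mul_derivative_of_X_sub_C_mul_dvd h
    rw [mul_comm (X - C β)] at hq_dvd
    obtain ⟨a, b, hab⟩ := ih _ hdeg hq hq_dvd rfl
    exact ⟨a, b + 1, by convert hab.mul_left (X - C β) using 1; ring⟩
  have hcop : IsCoprime p ((X - C α) * (X - C β)) :=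
    (((irreducible_X_sub_C α).coprime_iff_not_dvd.mpr hα).mul_left
      ((irreducible_X_sub_C β).coprime_iff_not_dvd.mpr hβ)).symm
  refine ⟨0, 0, ?_⟩
  simpa using associated_one_iff_isUnit.mpr (isUnit_of_dvd_mul_derivative hp hcop h)

end Polynomial

namespace Module.End

section CommRing

variable {K V : Type*} [CommRing K] [AddCommGroup V] [Module K V]

def annIdealAt (T : Module.End K V) (v : V) : Ideal K[X] where
  carrier := {p | aeval T p v = 0}
  add_mem' := by simp_all
  zero_mem' := by simp
  smul_mem' c p hp := by simp_all [Module.End.mul_apply]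

variable {T : Module.End K V} {v : V}

@[simp]
theorem mem_annIdealAt {p : K[X]} : p ∈ annIdealAt T v ↔ aeval T p v = 0 := Iff.rfl

theorem aeval_C_mul_X_pow_apply (c : K) (k : ℕ) (v : V) :
    aeval T (C c * X ^ k) v = c • (T ^ k) v := by
  simp [Module.End.mul_apply, Module.algebraMap_end_apply]

end CommRing

theorem annIdealAt_ne_bot {K V : Type*} [Field K] [AddCommGroup V] [Module K V]
    {T : Module.End K V} {v : V} (W : Submodule K V) [FiniteDimensional K W]
    (hW : ∀ n : ℕ, (T ^ n) v ∈ W) : annIdealAt T v ≠ ⊥ := by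
  have hmem : ∀ p : K[X], aeval T p v ∈ W := by
    intro p
    induction p using Polynomial.induction_on' with
    | add p q hp hq => simpa using add_mem hp hq
    | monomial n a => simpa [← C_mul_X_pow_eq_monomial] using W.smul_mem a (hW n)
  let φ : K[X] →ₗ[K] W :=
    LinearMap.codRestrict W ((LinearMap.applyₗ v).comp (aeval T).toLinearMap) hmem
  intro hbot
  have hinj : Function.Injective φ := by
    rw [← LinearMap.ker_eq_bot, eq_bot_iff]
    intro p hp
    have hp : p ∈ annIdealAt T v := congrArg Subtype.val hp
    simpa [hbot] using hp
  exact Polynomial.not_finite (Module.Finite.of_injective φ hinj)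

end Module.End

def IsRotaBaxter {F A : Type*} [CommRing F] [NonUnitalNonAssocRing A] [Module F A] (lam : F)
    (R : A →ₗ[F] A) : Prop :=
  ∀ x y : A, R x * R y = R (R x * y + x * R y + lam • (x * y))

namespace IsRotaBaxter

open Module.End

section CommRing

variable {F A : Type*} [CommRing F] [NonAssocRing A] [Module F A] {lam : F} {R : A →ₗ[F] A}

theorem apply_one_mul_pow_apply_one (hR : IsRotaBaxter lam R) (n : ℕ) :
    R 1 * (R ^ n) 1 = ((n : F) + 1) • (R ^ (n + 1)) 1 + ((n : F) * lam) • (R ^ n) 1 := by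
  induction n with
  | zero => simp
  | succ n ih =>
    rw [pow_succ', mul_apply, hR, one_mul, one_mul, ih]
    simp only [map_add, map_smul, ← mul_apply, ← pow_succ']
    push_cast
    module

variable [SMulCommClass F A A]

theorem apply_one_mul_aeval (hR : IsRotaBaxter lam R) (p : F[X]) :
    R 1 * aeval R p 1 = aeval R (X * (X + C lam) * derivative p + X * p) 1 := by
  induction p using Polynomial.induction_on with
  | C a => simp [Module.algebraMap_end_apply, mul_smul_comm]
  | add p q hp hq =>
    simp only [mul_add, map_add, LinearMap.add_apply, hp, hq]
    abel
  | monomial n a _ =>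
    have hpoly : X * (X + C lam) * derivative (C a * X ^ (n + 1)) + X * (C a * X ^ (n + 1))
        = C (a * (n + 2)) * X ^ (n + 2) + C (a * (n + 1) * lam) * X ^ (n + 1) := by
      rw [derivative_C_mul_X_pow]
      simp only [add_tsub_cancel_right, Nat.cast_succ, map_mul, map_add, map_natCast, map_one]
      rw [show (C (2 : F)) = 2 from rfl]
      ring
    simp only [hpoly, map_add, LinearMap.add_apply, aeval_C_mul_X_pow_apply]
    rw [mul_smul_comm, hR.apply_one_mul_pow_apply_one]
    push_cast
    module

theorem mul_derivative_mem_annIdealAt (hR : IsRotaBaxter lam R) {p : F[X]}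
    (hp : p ∈ annIdealAt R 1) : X * (X + C lam) * derivative p ∈ annIdealAt R 1 := by
  have hXp : X * p ∈ annIdealAt R 1 := Ideal.mul_mem_left _ X hp
  rw [mem_annIdealAt] at hp hXp ⊢
  have h := hR.apply_one_mul_aeval p
  rwa [hp, mul_zero, map_add, LinearMap.add_apply, hXp, add_zero, eq_comm] at h

end CommRing

variable {F A : Type*} [Field F] [CharZero F] [NonAssocRing A] [Module F A]
  [IsScalarTower F A A] [SMulCommClass F A A] {lam : F} {R : A →ₗ[F] A}

theorem pow_apply_one_mem_adjoin (hR : IsRotaBaxter lam R) (n : ℕ) :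
    (R ^ n) 1 ∈ NonUnitalAlgebra.adjoin F {1, R 1} := by
  induction n with
  | zero => exact NonUnitalAlgebra.subset_adjoin F (by simp)
  | succ n ih =>
    have hR1 : R 1 ∈ NonUnitalAlgebra.adjoin F {1, R 1} :=
      NonUnitalAlgebra.subset_adjoin F (by simp)
    have hrec : (R ^ (n + 1)) 1
        = ((n : F) + 1)⁻¹ • (R 1 * (R ^ n) 1 - ((n : F) * lam) • (R ^ n) 1) := by
      rw [hR.apply_one_mul_pow_apply_one, add_sub_cancel_right, smul_smul,
        inv_mul_cancel₀ (Nat.cast_add_one_ne_zero n), one_smul]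
    rw [hrec]
    exact SMulMemClass.smul_mem _ (sub_mem (mul_mem hR1 ih) (SMulMemClass.smul_mem _ ih))

end IsRotaBaxter

open Module.End Submodule.IsPrincipal in
theorem rb_nonzero_weight_kills_one_general
    {F : Type*} [Field F] [CharZero F]
    {A : Type*} [NonAssocRing A] [Module F A] [SMulCommClass F A A] [IsScalarTower F A A]
    (halg : ∀ s : Finset A,
      FiniteDimensional F (NonUnitalAlgebra.adjoin F (↑s : Set A)))
    (lam : F) (R : A →ₗ[F] A)
    (hR : ∀ x y : A, R x * R y = R (R x * y + x * R y + lam • (x * y))) :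
    ∃ r s : ℕ,
      (((R + lam • LinearMap.id) ^ r : A →ₗ[F] A)) ((R ^ s) (1 : A)) = 0 := by
  classical
  have hRB : IsRotaBaxter lam R := hR
  have hfd := halg {1, R 1}
  rw [Finset.coe_insert, Finset.coe_singleton] at hfd
  set I := annIdealAt R 1
  have hI : I ≠ ⊥ :=
    annIdealAt_ne_bot (NonUnitalAlgebra.adjoin F {1, R 1}).toSubmodule hRB.pow_apply_one_mem_adjoin
  have hq : generator I ∈ I := generator_mem I
  have hq0 : generator I ≠ 0 := fun h => hI ((eq_bot_iff_generator_eq_zero I).mpr h)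
  have hdvd : generator I ∣ (X - C 0) * (X - C (-lam)) * derivative (generator I) := by
    simpa using (mem_iff_generator_dvd I).mp (hRB.mul_derivative_mem_annIdealAt hq)
  obtain ⟨s, r, hqa⟩ := associated_pow_mul_pow_of_dvd_mul_derivative 0 (-lam) hq0 hdvd
  have hmem : (X + C lam) ^ r * X ^ s ∈ I := by
    simpa [mul_comm] using I.mem_of_dvd hqa.dvd hq
  refine ⟨r, s, ?_⟩
  simpa [mul_apply, Module.algebraMap_end_eq_smul_id] using mem_annIdealAt.mp hmem

/-- For a unital algebraic (not necessarily associative) algebra `A` over a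
field `F` of characteristic zero and a Rota–Baxter operator `R` of nonzero weight `lam`,
there exist `r, s` with `((R + lam • id)^r ∘ R^s)(1) = 0`. -/
theorem rb_nonzero_weight_kills_one
    {F : Type*} [Field F] [CharZero F]
    {A : Type*} [NonAssocRing A] [Module F A] [SMulCommClass F A A] [IsScalarTower F A A]
    (halg : ∀ s : Finset A,
      FiniteDimensional F (NonUnitalAlgebra.adjoin F (↑s : Set A)))
    (lam : F) (hlam : lam ≠ 0) (R : A →ₗ[F] A)
    (hR : ∀ x y : A, R x * R y = R (R x * y + x * R y + lam • (x * y))) :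
    ∃ r s : ℕ,
      (((R + lam • LinearMap.id) ^ r : A →ₗ[F] A)) ((R ^ s) (1 : A)) = 0 :=
  rb_nonzero_weight_kills_one_general halg lam R hR
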